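/- Let [b_1,…,b_r] be a core and let k ≥ 1. Consider the sequence consisting of k+1 consecutive copies of (b_1,…,b_r) separated by k single entries equal to 1. Contracting the k inserted entries equal to 1 one at a time (each contraction replacing a consecutive triple (x, 1, y) by (x−1, y−1)) yields a sequence [b^k_1,…,b^k_{r_k}] all of whose entries are ≥ 2, of length r_k = r·(k+1), and satisfying Σ_{j=1}^{r_k} (b^k_j − 2) = (k+1)·Σ_{j=1}^{r} (b_j − 2) − 2k. -/

import Mathlib

/-- `chainSeq L k` consists of `k+1` consecutive copies of `L` separated by
`k` single entries equal to `1`. -/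
def chainSeq (L : List ℤ) : ℕ → List ℤ
  | 0 => L
  | (k + 1) => chainSeq L k ++ 1 :: L

/-- A core is a finite sequence `[e₁,…,eₛ]` of integers with all `eᵢ ≥ 2` such
that either `s = 1` and `e₁ ≥ 4`, or `s ≥ 2`, `e₁ ≥ 3` and `eₛ ≥ 3`. -/
def IsCore (E : List ℤ) : Prop :=
  (∀ e ∈ E, 2 ≤ e) ∧
    ((E.length = 1 ∧ 4 ≤ E.headI) ∨ (2 ≤ E.length ∧ 3 ≤ E.headI ∧ 3 ≤ E.getLast!))

/-- A single contraction of an entry equal to `1`: a consecutive triple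
`(x, 1, y)` is replaced by the pair `(x−1, y−1)`. -/
def ContractStep (L L' : List ℤ) : Prop :=
  ∃ (p s : List ℤ) (x y : ℤ),
    L = p ++ x :: 1 :: y :: s ∧ L' = p ++ (x - 1) :: (y - 1) :: s

/-- `ContractIter k L L'` means `L'` is obtained from `L` by `k` contractions
of entries equal to `1`, performed one at a time. -/
def ContractIter : ℕ → List ℤ → List ℤ → Prop
  | 0 => fun L L' => L = L'
  | (k + 1) => fun L L' => ∃ M, ContractStep L M ∧ ContractIter k M L'

/-! The chain of `k + 1` copies of a core joined by `1`s is the intercalation `[1].intercalate`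
of a list of cores. A core contains no `1` and its end entries are `≥ 3`, so every `1` of such a
list is a separator, and contracting it merges the two neighbouring cores into one core: the
entries `x - 1`, `y - 1` stay `≥ 2`, and a new end entry stays `≥ 3` because the entry of a core
of length one is `≥ 4`. After `k` contractions a single core is left, whatever the order. Each
contraction removes one entry and lowers `Σ (e - 2)` by exactly `1`, which gives the length and
the sum. -/

theorem List.getLast!_append_singleton {α : Type*} [Inhabited α] (l : List α) (a : α) :
    (l ++ [a]).getLast! = a :=
  List.getLast!_of_getLast? List.getLast?_concat

namespace IsCore

variable {E p t : List ℤ} {x y : ℤ}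

theorem ne_nil (h : IsCore E) : E ≠ [] := by
  rcases h.2 with ⟨hl, -⟩ | ⟨hl, -⟩ <;> exact List.ne_nil_of_length_pos (by omega)

theorem one_notMem (h : IsCore E) : (1 : ℤ) ∉ E := fun h1 => by
  have := h.1 1 h1
  omega

theorem head_bound (h : IsCore (y :: t)) : 3 ≤ y ∧ (t = [] → 4 ≤ y) := by
  rcases h.2 with ⟨hl, hy⟩ | ⟨hl, hy, -⟩
  · obtain rfl : t = [] := by simpa using hl
    exact ⟨by change 4 ≤ y at hy; omega, fun _ => hy⟩
  · exact ⟨hy, fun ht => by simp [ht] at hl⟩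

theorem last_bound (h : IsCore (p ++ [x])) : 3 ≤ x ∧ (p = [] → 4 ≤ x) := by
  rcases h.2 with ⟨hl, hx⟩ | ⟨hl, -, hx⟩
  · obtain rfl : p = [] := by simpa using hl
    exact ⟨by change 4 ≤ x at hx; omega, fun _ => hx⟩
  · exact ⟨by rwa [List.getLast!_append_singleton] at hx, fun hp => by simp [hp] at hl⟩

theorem merge (h₁ : IsCore (p ++ [x])) (h₂ : IsCore (y :: t)) :
    IsCore (p ++ (x - 1) :: (y - 1) :: t) := by
  obtain ⟨hx, hx₄⟩ := h₁.last_bound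
  obtain ⟨hy, hy₄⟩ := h₂.head_bound
  refine ⟨?_, Or.inr ⟨?_, ?_, ?_⟩⟩
  · intro e he
    simp only [List.mem_append, List.mem_cons] at he
    rcases he with he | rfl | rfl | he
    · exact h₁.1 e (by simp [he])
    · omega
    · omega
    · exact h₂.1 e (by simp [he])
  · simp only [List.length_append, List.length_cons]
    omega
  · cases p with
    | nil =>
      change 3 ≤ x - 1
      linarith [hx₄ rfl]
    | cons a p => exact (show IsCore (a :: (p ++ [x])) from h₁).head_bound.1
  · cases t using List.reverseRecOn with
    | nil =>
      rw [show p ++ [x - 1, y - 1] = (p ++ [x - 1]) ++ [y - 1] by simp,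
        List.getLast!_append_singleton]
      linarith [hy₄ rfl]
    | append_singleton t b _ =>
      rw [show p ++ (x - 1) :: (y - 1) :: (t ++ [b]) = (p ++ (x - 1) :: (y - 1) :: t) ++ [b] by
        simp, List.getLast!_append_singleton]
      exact (show IsCore ((y :: t) ++ [b]) from h₂).last_bound.1

end IsCore

theorem List.append_cons_eq_append_cons_cons_cons {α : Type*} {a x y : α} {B R p s : List α}
    (hB : a ∉ B) (hR : R.head? ≠ some a) (h : B ++ a :: R = p ++ x :: a :: y :: s) :
    (B = p ++ [x] ∧ R = y :: s) ∨ ∃ q, p = B ++ a :: q ∧ R = q ++ x :: a :: y :: s := by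
  rcases List.append_eq_append_iff.mp h with
    ⟨_ | ⟨c, q⟩, hp, hq⟩ | ⟨_ | ⟨c, _ | ⟨d, q⟩⟩, hB', hq⟩
  · simp only [List.nil_append, List.cons.injEq] at hq
    simp [hq.2] at hR
  · simp only [List.cons_append, List.cons.injEq] at hq
    exact Or.inr ⟨q, hq.1 ▸ hp, hq.2⟩
  · simp only [List.nil_append, List.cons.injEq] at hq
    simp [← hq.2] at hR
  · simp only [List.cons_append, List.nil_append, List.cons.injEq] at hq
    exact Or.inl ⟨hq.1 ▸ hB', hq.2.2.symm⟩
  · simp only [List.cons_append, List.cons.injEq] at hq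
    exact absurd (hB' ▸ by simp [← hq.2.1]) hB

theorem List.intercalate_cons_append {α : Type*} (sep p l : List α) (Bs : List (List α)) :
    sep.intercalate ((p ++ l) :: Bs) = p ++ sep.intercalate (l :: Bs) := by
  cases Bs <;> simp

theorem exists_of_contractStep_intercalate :
    ∀ {Bs : List (List ℤ)} {M : List ℤ}, (∀ B ∈ Bs, IsCore B) →
      ContractStep ([1].intercalate Bs) M →
      ∃ Cs : List (List ℤ), (∀ C ∈ Cs, IsCore C) ∧ Cs.length + 1 = Bs.length ∧
        M = [1].intercalate Cs
  | [], _, _, ⟨p, s, x, y, hL, _⟩ => by simp at hL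
  | [B], _, hBs, ⟨p, s, x, y, hL, _⟩ =>
    ((hBs B (by simp)).one_notMem (by rw [List.intercalate_singleton] at hL; simp [hL])).elim
  | B₁ :: B₂ :: Bs, M, hBs, ⟨p, s, x, y, hL, hM⟩ => by
    simp only [List.forall_mem_cons] at hBs
    obtain ⟨h₁, h₂, hBs⟩ := hBs
    obtain ⟨y₂, t, rfl⟩ := List.exists_cons_of_ne_nil h₂.ne_nil
    have hhead : ([1].intercalate ((y₂ :: t) :: Bs)).head? ≠ some 1 := by
      have := h₂.head_bound.1
      simp only [List.intercalate_cons_cons_left, List.head?_cons, ne_eq, Option.some.injEq]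
      omega
    have hsplit : B₁ ++ 1 :: [1].intercalate ((y₂ :: t) :: Bs) = p ++ x :: 1 :: y :: s := by
      simpa using hL
    rcases List.append_cons_eq_append_cons_cons_cons h₁.one_notMem hhead hsplit with
      ⟨rfl, hs⟩ | ⟨q, rfl, hq⟩
    · simp only [List.intercalate_cons_cons_left, List.cons.injEq] at hs
      obtain ⟨rfl, rfl⟩ := hs
      exact ⟨(p ++ (x - 1) :: (y₂ - 1) :: t) :: Bs,
        List.forall_mem_cons.mpr ⟨h₁.merge h₂, hBs⟩,
        by simp, by simp [hM, List.intercalate_cons_append]⟩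
    · obtain ⟨Cs, hCs, hlen, hM'⟩ := exists_of_contractStep_intercalate
        (List.forall_mem_cons.mpr ⟨h₂, hBs⟩) ⟨q, s, x, y, hq, rfl⟩
      have hne : Cs ≠ [] := by
        rintro rfl
        simp at hM'
      refine ⟨B₁ :: Cs, List.forall_mem_cons.mpr ⟨h₁, hCs⟩, by simpa using hlen, ?_⟩
      rw [hM, List.intercalate_cons_of_ne_nil hne, ← hM']
      simp

theorem exists_contractStep_intercalate {B₁ B₂ : List ℤ} (Bs : List (List ℤ))
    (h₁ : IsCore B₁) (h₂ : IsCore B₂) :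
    ∃ C, IsCore C ∧
      ContractStep ([1].intercalate (B₁ :: B₂ :: Bs)) ([1].intercalate (C :: Bs)) := by
  obtain ⟨p, x, rfl⟩ := (List.eq_nil_or_concat B₁).resolve_left h₁.ne_nil
  rw [List.concat_eq_append] at h₁ ⊢
  obtain ⟨y, t, rfl⟩ := List.exists_cons_of_ne_nil h₂.ne_nil
  refine ⟨_, h₁.merge h₂, p, [1].intercalate (t :: Bs), x, y, ?_, ?_⟩
  all_goals simp [List.intercalate_cons_append]

theorem exists_contractIter_intercalate :
    ∀ (m : ℕ) {Bs : List (List ℤ)}, Bs.length = m + 1 → (∀ B ∈ Bs, IsCore B) →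
      ∃ E, ContractIter m ([1].intercalate Bs) E
  | 0, _, _, _ => ⟨_, rfl⟩
  | m + 1, B₁ :: B₂ :: Bs, hlen, hBs => by
    simp only [List.forall_mem_cons] at hBs
    obtain ⟨h₁, h₂, hBs⟩ := hBs
    obtain ⟨C, hC, hstep⟩ := exists_contractStep_intercalate Bs h₁ h₂
    obtain ⟨E, hE⟩ := exists_contractIter_intercalate m (Bs := C :: Bs) (by simpa using hlen)
      (List.forall_mem_cons.mpr ⟨hC, hBs⟩)
    exact ⟨E, _, hstep, hE⟩

theorem isCore_of_contractIter_intercalate :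
    ∀ (m : ℕ) {Bs : List (List ℤ)} {E : List ℤ}, Bs.length = m + 1 →
      (∀ B ∈ Bs, IsCore B) →
      ContractIter m ([1].intercalate Bs) E → IsCore E
  | 0, Bs, E, hlen, hBs, hE => by
    obtain ⟨B, rfl⟩ := List.length_eq_one_iff.mp hlen
    rw [List.intercalate_singleton] at hE
    exact (hE : B = E) ▸ hBs B (by simp)
  | m + 1, Bs, E, hlen, hBs, ⟨M, hstep, hE⟩ => by
    obtain ⟨Cs, hCs, hlen', rfl⟩ := exists_of_contractStep_intercalate hBs hstep
    exact isCore_of_contractIter_intercalate m (by omega) hCs hE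

section Bookkeeping

variable {L L' : List ℤ}

theorem ContractStep.length_eq (h : ContractStep L L') : L.length = L'.length + 1 := by
  obtain ⟨p, s, x, y, rfl, rfl⟩ := h
  simp only [List.length_append, List.length_cons]
  omega

theorem ContractStep.sum_map_sub_two (h : ContractStep L L') :
    (L'.map (· - 2)).sum = (L.map (· - 2)).sum - 1 := by
  obtain ⟨p, s, x, y, rfl, rfl⟩ := h
  simp only [List.map_append, List.map_cons, List.sum_append, List.sum_cons]
  ring

theorem ContractIter.length_eq :
    ∀ {m : ℕ} {L L' : List ℤ}, ContractIter m L L' → L.length = L'.length + m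
  | 0, _, _, rfl => rfl
  | _ + 1, _, _, ⟨_, hstep, h⟩ => by rw [hstep.length_eq, h.length_eq]; omega

theorem ContractIter.sum_map_sub_two :
    ∀ {m : ℕ} {L L' : List ℤ}, ContractIter m L L' →
      (L'.map (· - 2)).sum = (L.map (· - 2)).sum - (m : ℤ)
  | 0, _, _, rfl => by simp
  | _ + 1, _, _, ⟨_, hstep, h⟩ => by
    rw [h.sum_map_sub_two, hstep.sum_map_sub_two]
    push_cast
    ring

end Bookkeeping

theorem chainSeq_succ' (L : List ℤ) : ∀ k, chainSeq L (k + 1) = L ++ 1 :: chainSeq L k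
  | 0 => rfl
  | k + 1 => by
    change chainSeq L (k + 1) ++ 1 :: L = L ++ 1 :: (chainSeq L k ++ 1 :: L)
    rw [chainSeq_succ' L k, List.append_assoc, List.cons_append]

theorem chainSeq_eq_intercalate (L : List ℤ) :
    ∀ k, chainSeq L k = [1].intercalate (List.replicate (k + 1) L)
  | 0 => by simp [chainSeq]
  | k + 1 => by
    rw [chainSeq_succ', chainSeq_eq_intercalate L k, List.replicate_succ (n := k + 1),
      List.replicate_succ, List.intercalate_cons_cons]
    simp

theorem length_chainSeq (L : List ℤ) : ∀ k, (chainSeq L k).length = L.length * (k + 1) + k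
  | 0 => by simp [chainSeq]
  | k + 1 => by
    simp only [chainSeq, List.length_append, List.length_cons, length_chainSeq L k]
    ring

theorem sum_map_sub_two_chainSeq (L : List ℤ) :
    ∀ k, ((chainSeq L k).map (· - 2)).sum = ((k : ℤ) + 1) * (L.map (· - 2)).sum - k
  | 0 => by simp [chainSeq]
  | k + 1 => by
    simp only [chainSeq, List.map_append, List.map_cons, List.sum_append, List.sum_cons,
      sum_map_sub_two_chainSeq L k]
    push_cast
    ring

theorem stmt13_general (b : List ℤ) (hb : IsCore b) (k : ℕ) :
    (∃ E : List ℤ, ContractIter k (chainSeq b k) E) ∧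
      ∀ E : List ℤ, ContractIter k (chainSeq b k) E →
        (∀ x ∈ E, 2 ≤ x) ∧ E.length = b.length * (k + 1) ∧
          (E.map (fun x => x - 2)).sum =
            ((k : ℤ) + 1) * (b.map (fun x => x - 2)).sum - 2 * (k : ℤ) := by
  have hcores : ∀ B ∈ List.replicate (k + 1) b, IsCore B := fun B hB =>
    List.eq_of_mem_replicate hB ▸ hb
  rw [chainSeq_eq_intercalate]
  refine ⟨exists_contractIter_intercalate k (by simp) hcores, fun E hE => ⟨?_, ?_, ?_⟩⟩
  · exact (isCore_of_contractIter_intercalate k (by simp) hcores hE).1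
  · have := hE.length_eq
    rw [← chainSeq_eq_intercalate, length_chainSeq] at this
    omega
  · rw [hE.sum_map_sub_two, ← chainSeq_eq_intercalate, sum_map_sub_two_chainSeq]
    ring

/-- Let `[b₁,…,b_r]` be a core and `k ≥ 1`. Contracting, one at a time, the
`k` inserted entries equal to `1` in the chain of `k+1` consecutive copies of
`(b₁,…,b_r)` separated by `k` single entries equal to `1` yields a sequence
`[b^k₁,…,b^k_{r_k}]` all of whose entries are `≥ 2`, of length
`r_k = r·(k+1)`, satisfying `Σ (b^k_j − 2) = (k+1)·Σ (b_j − 2) − 2k`. -/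
theorem stmt13 (b : List ℤ) (hb : IsCore b) (k : ℕ) (hk : 1 ≤ k) :
    (∃ E : List ℤ, ContractIter k (chainSeq b k) E) ∧
      ∀ E : List ℤ, ContractIter k (chainSeq b k) E →
        (∀ x ∈ E, 2 ≤ x) ∧ E.length = b.length * (k + 1) ∧
          (E.map (fun x => x - 2)).sum =
            ((k : ℤ) + 1) * (b.map (fun x => x - 2)).sum - 2 * (k : ℤ) :=
  stmt13_general b hb k
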